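/- arXiv:0901.3541 — 2 statements merged into one kernel-verified Lean document; each statement's English description precedes it below -/
import Mathlib

section
/- For every graph F with at least one edge and every positive integer n divisible by |F|, there exists a graph G on n vertices with minimum degree at least ⌈(1 − 1/χ_cr(F))·n⌉ − 1 which does not contain a perfect F-packing. -/
open SimpleGraph

/-- `S` is the vertex set of a copy of `F` in `G`. -/
def SimpleGraph.IsCopy {W V : Type*} (F : SimpleGraph W) (G : SimpleGraph V) (S : Set V) : Prop :=
  ∃ f : F →g G, Function.Injective f ∧ Set.range f = S

/-- `G` has a perfect `F`-packing. -/
def SimpleGraph.HasPerfectPacking {W V : Type*} (F : SimpleGraph W) (G : SimpleGraph V) : Prop :=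
  ∃ Pset : Set (Set V), Pset.PairwiseDisjoint id ∧ ⋃₀ Pset = Set.univ ∧ ∀ S ∈ Pset, F.IsCopy G S

/-- The size of the smallest colour class of a colouring `c` of `F` with
`χ(F)` colours (an "optimal" colouring). -/
noncomputable def SimpleGraph.minClassSize {W : Type*} [Fintype W] (F : SimpleGraph W)
    (c : F.Coloring (Fin F.chromaticNumber.toNat)) : ℕ :=
  sInf { t : ℕ | ∃ i, t = (⇑c ⁻¹' {i}).ncard }

/-- `σ(F)`: the minimum over all optimal colourings of `F` of the size of the
smallest colour class. -/
noncomputable def SimpleGraph.sigmaMin {W : Type*} [Fintype W] (F : SimpleGraph W) : ℕ :=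
  sInf { s : ℕ | ∃ c : F.Coloring (Fin F.chromaticNumber.toNat), s = F.minClassSize c }

/-- The critical chromatic number `χ_cr(F) = (χ(F) - 1)·|F| / (|F| - σ(F))`. -/
noncomputable def SimpleGraph.chiCr {W : Type*} [Fintype W] (F : SimpleGraph W) : ℝ :=
  ((F.chromaticNumber.toNat : ℝ) - 1) * (Fintype.card W) /
    ((Fintype.card W : ℝ) - F.sigmaMin)

/-!
Write `χ = χ(F)`, `σ = σ(F)` and `n = |F| m`. The extremal graph is the complete `χ`-partite
graph `(⊤ : SimpleGraph (Fin χ)).comap p`, whose parts are the fibres of `p`: one part has fewer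
than `σ m` vertices, and the other `χ - 1` parts share the remaining vertices evenly, so that no
part has more than `⌊(|F| - σ) m / (χ - 1)⌋ + 1` vertices. A vertex misses only its own part,
and `(1 - 1 / χ_cr(F)) n = n - (|F| - σ) m / (χ - 1)`, which gives the degree bound.
Composing a copy of `F` with `p` yields an optimal colouring of `F`, so every copy meets every
part in at least `σ` vertices; the `m` copies of a perfect packing would need `σ m` vertices in
the small part.
-/

theorem Set.ncard_preimage_le_of_injective {α β : Type*} {f : α → β} (hf : f.Injective)
    {t : Set β} (ht : t.Finite) : (f ⁻¹' t).ncard ≤ t.ncard :=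
  Set.ncard_le_ncard_of_injOn f (fun _ h => h) hf.injOn ht

theorem Finset.ncard_eq_sum_ncard_inter {V : Type*} {P : Finset (Set V)}
    (hP : (P : Set (Set V)).PairwiseDisjoint id) {A : Set V} (hA : A.Finite)
    (hcover : A ⊆ ⋃₀ ↑P) : A.ncard = ∑ S ∈ P, (S ∩ A).ncard := by
  have hA' : A = ⋃ S ∈ (P : Set (Set V)), S ∩ A := by
    rw [← Set.iUnion₂_inter, ← Set.sUnion_eq_biUnion, Set.inter_eq_right.2 hcover]
  conv_lhs => rw [hA']
  rw [P.finite_toSet.ncard_biUnion (s := fun S => S ∩ A) (fun _ _ => hA.inter_of_right _)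
    (hP.mono fun _ => Set.inter_subset_left), finsum_mem_coe_finset]

theorem exists_ncard_fiber_le {V ι : Type*} [Fintype V] [Fintype ι] [DecidableEq ι] (i₀ : ι)
    {s Q : ℕ} (hV : Fintype.card V ≤ s + (Fintype.card ι - 1) * Q) : ∃ p : V → ι,
    (p ⁻¹' {i₀}).ncard ≤ s ∧ ∀ i ≠ i₀, (p ⁻¹' {i}).ncard ≤ Q := by
  obtain ⟨e⟩ : Nonempty (V ↪ Fin s ⊕ {i // i ≠ i₀} × Fin Q) :=
    Function.Embedding.nonempty_of_card_le (by simpa [Fintype.card_subtype_compl] using hV)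
  let g : Fin s ⊕ {i // i ≠ i₀} × Fin Q → ι := Sum.elim (fun _ => i₀) (fun x => x.1)
  refine ⟨g ∘ e, ?_, fun i hi => ?_⟩
  · calc _ ≤ (g ⁻¹' {i₀}).ncard :=
          Set.ncard_preimage_le_of_injective e.injective (Set.toFinite _)
      _ ≤ (Set.range (Sum.inl : Fin s → _)).ncard := by
          refine Set.ncard_le_ncard ?_ (Set.toFinite _)
          rintro (x | ⟨⟨i, hi⟩, j⟩) hx
          · exact Set.mem_range_self x
          · exact absurd hx hi
      _ = s := by rw [Set.ncard_range_of_injective Sum.inl_injective]; simp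
  · calc _ ≤ (g ⁻¹' {i}).ncard :=
          Set.ncard_preimage_le_of_injective e.injective (Set.toFinite _)
      _ ≤ (Set.range fun j : Fin Q =>
            (Sum.inr ((⟨i, hi⟩ : {i // i ≠ i₀}), j) : Fin s ⊕ _)).ncard := by
          refine Set.ncard_le_ncard ?_ (Set.toFinite _)
          rintro (x | ⟨⟨i', hi'⟩, j⟩) hx
          · exact absurd hx.symm hi
          · obtain rfl : i' = i := hx
            exact Set.mem_range_self j
      _ = Q := by
          rw [Set.ncard_range_of_injective (fun j j' h => by simpa using h)]; simp

namespace SimpleGraph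

theorem ncard_neighborSet_comap_top_add {V ι : Type*} [Finite V] (p : V → ι) (v : V) :
    (((⊤ : SimpleGraph ι).comap p).neighborSet v).ncard + (p ⁻¹' {p v}).ncard =
      Nat.card V := by
  rw [neighborSet_comap, neighborSet_top, Set.preimage_compl, add_comm, Set.ncard_add_ncard_compl]

theorem Coloring.surjective_of_chromaticNumber {W : Type*} {F : SimpleGraph W}
    (c : F.Coloring (Fin F.chromaticNumber.toNat)) : Function.Surjective c :=
  le_chromaticNumber_iff_forall_surjective.1 (ENat.natCast_toNat_le_self _) c

variable {W : Type*} [Fintype W] {F : SimpleGraph W}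

theorem two_le_chromaticNumber_toNat (hF : F.edgeSet.Nonempty) : 2 ≤ F.chromaticNumber.toNat := by
  have hne : F.chromaticNumber ≠ ⊤ :=
    chromaticNumber_ne_top_iff_exists.2 ⟨_, F.colorable_of_fintype⟩
  have h := two_le_chromaticNumber_iff_ne_bot.2 (edgeSet_nonempty.1 hF)
  rw [← ENat.natCast_toNat hne] at h
  exact_mod_cast h

theorem sigmaMin_le_ncard_preimage (c : F.Coloring (Fin F.chromaticNumber.toNat))
    (i : Fin F.chromaticNumber.toNat) : F.sigmaMin ≤ (c ⁻¹' {i}).ncard :=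
  calc F.sigmaMin ≤ F.minClassSize c := Nat.sInf_le ⟨c, rfl⟩
    _ ≤ _ := Nat.sInf_le ⟨i, rfl⟩

theorem one_le_sigmaMin (hχ : 0 < F.chromaticNumber.toNat) : 1 ≤ F.sigmaMin := by
  obtain ⟨c⟩ := F.colorable_chromaticNumber_of_fintype
  refine le_csInf ?_ ?_
  · exact ⟨_, c, rfl⟩
  rintro _ ⟨c, rfl⟩
  refine le_csInf ?_ ?_
  · exact ⟨_, ⟨0, hχ⟩, rfl⟩
  rintro _ ⟨i, rfl⟩
  exact (Set.ncard_pos (Set.toFinite _)).2 (c.surjective_of_chromaticNumber i)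

theorem chromaticNumber_toNat_mul_sigmaMin_le_card :
    F.chromaticNumber.toNat * F.sigmaMin ≤ Fintype.card W := by
  classical
  obtain ⟨c⟩ := F.colorable_chromaticNumber_of_fintype
  calc F.chromaticNumber.toNat * F.sigmaMin = ∑ _i, F.sigmaMin := by simp
    _ ≤ ∑ i, (c ⁻¹' {i}).ncard := Finset.sum_le_sum fun i _ => sigmaMin_le_ncard_preimage c i
    _ = Fintype.card W := by
        rw [← Finset.card_univ, Finset.card_eq_sum_card_fiberwise (f := c) (t := Finset.univ)
          (fun _ _ => Finset.mem_univ _)]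
        simp [Set.ncard_eq_toFinset_card']

theorem ceil_one_sub_one_div_chiCr_mul_le (hχ : 1 ≤ F.chromaticNumber.toNat) (m : ℕ) :
    ⌈(1 - 1 / F.chiCr) * (Fintype.card W * m : ℕ)⌉ ≤ ((Fintype.card W * m : ℕ) : ℤ) -
      ((Fintype.card W - F.sigmaMin) * m / (F.chromaticNumber.toNat - 1) : ℕ) := by
  rcases (Fintype.card W).eq_zero_or_pos with hW | hW
  · simp [hW]
  have hσ : F.sigmaMin ≤ Fintype.card W := by
    nlinarith [F.chromaticNumber_toNat_mul_sigmaMin_le_card]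
  have hfloor := Nat.cast_div_le (α := ℝ) (m := (Fintype.card W - F.sigmaMin) * m)
    (n := F.chromaticNumber.toNat - 1)
  generalize (Fintype.card W - F.sigmaMin) * m / (F.chromaticNumber.toNat - 1) = d at hfloor ⊢
  rw [Int.ceil_le, chiCr, one_div_div]
  push_cast [Nat.cast_sub hσ, Nat.cast_sub hχ] at hfloor ⊢
  have hW' : (Fintype.card W : ℝ) ≠ 0 := by positivity
  calc _ = (Fintype.card W : ℝ) * m - ((Fintype.card W - F.sigmaMin) * m /
      (F.chromaticNumber.toNat - 1) : ℝ) := by field_simp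
    _ ≤ _ := by linarith

theorem IsCopy.ncard_eq {V : Type*} {G : SimpleGraph V} {S : Set V} (h : F.IsCopy G S) :
    S.ncard = Fintype.card W := by
  obtain ⟨φ, hφ, rfl⟩ := h
  rw [Set.ncard_range_of_injective hφ, Nat.card_eq_fintype_card]

theorem IsCopy.sigmaMin_le_ncard_inter {V : Type*} {p : V → Fin F.chromaticNumber.toNat}
    {S : Set V} (h : F.IsCopy ((⊤ : SimpleGraph _).comap p) S) (i : Fin F.chromaticNumber.toNat) :
    F.sigmaMin ≤ (S ∩ p ⁻¹' {i}).ncard := by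
  obtain ⟨φ, hφ, rfl⟩ := h
  let c : F.Coloring (Fin F.chromaticNumber.toNat) := (Hom.comap p ⊤).comp φ
  calc F.sigmaMin ≤ (c ⁻¹' {i}).ncard := sigmaMin_le_ncard_preimage c i
    _ = (φ '' (φ ⁻¹' (p ⁻¹' {i}))).ncard := (Set.ncard_image_of_injective _ hφ).symm
    _ = _ := by rw [Set.image_preimage_eq_inter_range, Set.inter_comm]

theorem HasPerfectPacking.card_mul_sigmaMin_le {V : Type*} [Finite V]
    {p : V → Fin F.chromaticNumber.toNat}
    (h : F.HasPerfectPacking ((⊤ : SimpleGraph _).comap p))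
    (i : Fin F.chromaticNumber.toNat) :
    Nat.card V * F.sigmaMin ≤ Fintype.card W * (p ⁻¹' {i}).ncard := by
  obtain ⟨P, hdisj, hcover, hcopy⟩ := h
  lift P to Finset (Set V) using P.toFinite
  have hsum (A : Set V) : A.ncard = ∑ S ∈ P, (S ∩ A).ncard :=
    P.ncard_eq_sum_ncard_inter hdisj A.toFinite (hcover ▸ Set.subset_univ A)
  calc Nat.card V * F.sigmaMin = ∑ S ∈ P, S.ncard * F.sigmaMin := by
        rw [← Set.ncard_univ, hsum, Finset.sum_mul]; simp
    _ = ∑ S ∈ P, Fintype.card W * F.sigmaMin :=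
        Finset.sum_congr rfl fun S hS => by rw [(hcopy S hS).ncard_eq]
    _ ≤ ∑ S ∈ P, Fintype.card W * (S ∩ p ⁻¹' {i}).ncard :=
        Finset.sum_le_sum fun S hS =>
          Nat.mul_le_mul_left _ ((hcopy S hS).sigmaMin_le_ncard_inter i)
    _ = Fintype.card W * (p ⁻¹' {i}).ncard := by rw [hsum (p ⁻¹' {i}), Finset.mul_sum]

theorem exists_extremal_partition (hF : F.edgeSet.Nonempty) {m : ℕ} (hm : 0 < m) :
    ∃ (p : Fin (Fintype.card W * m) → Fin F.chromaticNumber.toNat) (i₀ : Fin _),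
      (p ⁻¹' {i₀}).ncard < F.sigmaMin * m ∧ ∀ i, (p ⁻¹' {i}).ncard ≤
        (Fintype.card W - F.sigmaMin) * m / (F.chromaticNumber.toNat - 1) + 1 := by
  have hχ := two_le_chromaticNumber_toNat hF
  have hσ := one_le_sigmaMin (F := F) (by omega)
  have hχσ := F.chromaticNumber_toNat_mul_sigmaMin_le_card
  set f := Fintype.card W
  set χ := F.chromaticNumber.toNat
  set σ := F.sigmaMin
  set d := (f - σ) * m / (χ - 1)
  have hσm : 1 ≤ σ * m := Nat.one_le_iff_ne_zero.2 (by positivity)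
  have hσd : σ * m ≤ d := by
    refine (Nat.le_div_iff_mul_le (by omega)).2 ?_
    zify [(by nlinarith : σ ≤ f), (by omega : 1 ≤ χ)]
    nlinarith
  have hd : f * m - σ * m < (χ - 1) * (d + 1) :=
    Nat.sub_mul f σ m ▸ Nat.lt_mul_div_succ _ (by omega)
  let i₀ : Fin χ := ⟨0, by omega⟩
  obtain ⟨p, hp₀, hp⟩ :=
    exists_ncard_fiber_le (V := Fin (f * m)) i₀ (s := σ * m - 1) (Q := d + 1)
      (by rw [Fintype.card_fin, Fintype.card_fin]; omega)
  refine ⟨p, i₀, by omega, fun i => ?_⟩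
  by_cases hi : i = i₀
  · rw [hi]; omega
  · exact hp i hi

end SimpleGraph

/-- For every graph `F` with an edge and every `n` divisible by `|F|` there is a graph `G`
on `n` vertices of minimum degree at least `⌈(1 - 1/χ_cr(F))n⌉ - 1` with no perfect
`F`-packing. -/
theorem lower_bound_critical_chromatic {W : Type*} [Fintype W] (F : SimpleGraph W)
    (hF : F.edgeSet.Nonempty) (n : ℕ) (hn : 0 < n) (hdvd : Fintype.card W ∣ n) :
    ∃ G : SimpleGraph (Fin n),
      (∀ v : Fin n, (⌈(1 - 1 / F.chiCr) * n⌉ - 1 : ℤ) ≤ ((G.neighborSet v).ncard : ℤ)) ∧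
      ¬ F.HasPerfectPacking G := by
  obtain ⟨m, rfl⟩ := hdvd
  have hm : 0 < m := Nat.pos_of_mul_pos_left hn
  have hχ := two_le_chromaticNumber_toNat hF
  have hceil := ceil_one_sub_one_div_chiCr_mul_le (F := F) (by omega) m
  obtain ⟨p, i₀, hp₀, hp⟩ := exists_extremal_partition hF hm
  refine ⟨(⊤ : SimpleGraph _).comap p, fun v => ?_, fun h => ?_⟩
  · have hdeg := ncard_neighborSet_comap_top_add p v
    rw [Nat.card_fin] at hdeg
    have := hp (p v)
    omega
  · have hpack := h.card_mul_sigmaMin_le i₀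
    rw [Nat.card_fin] at hpack
    have hf : 0 < Fintype.card W := Nat.pos_of_mul_pos_right hn
    have := Nat.mul_lt_mul_of_pos_left hp₀ hf
    linarith
end

section
/- Suppose that H = (A', B', E') is a bipartite graph on n ≥ 2 vertices with maximum degree Δ(H) ≤ log₂ n, and suppose m ≥ n⁸. Then every bipartite graph G = (A, B, E) with |A| = |B| = m and at least m²/8 edges contains a copy of H (with A' embedded into A and B' embedded into B). Moreover, R(H) ≤ 2n⁸. -/
open SimpleGraph

/-- `R(H) ≤ N`: every red/blue colouring of the edges of the complete graph on `N`
vertices contains a monochromatic copy of `H`. -/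
def RamseyLE {W : Type*} (H : SimpleGraph W) (N : ℕ) : Prop :=
  ∀ col : Sym2 (Fin N) → Bool, ∃ (b : Bool) (φ : W → Fin N),
    Function.Injective φ ∧ ∀ v w, H.Adj v w → col s(φ v, φ w) = b

/-- The bipartite graph with vertex classes `A` and `B` determined by the relation `R`. -/
def biGraph {A B : Type*} (R : A → B → Prop) : SimpleGraph (A ⊕ B) where
  Adj x y := (∃ a b, x = Sum.inl a ∧ y = Sum.inr b ∧ R a b) ∨
             (∃ a b, x = Sum.inr b ∧ y = Sum.inl a ∧ R a b)
  symm := by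
    constructor
    rintro x y (⟨a, b, rfl, rfl, h⟩ | ⟨a, b, rfl, rfl, h⟩)
    · exact Or.inr ⟨a, b, rfl, rfl, h⟩
    · exact Or.inl ⟨a, b, rfl, rfl, h⟩
  loopless := by
    constructor
    rintro x (⟨a, b, rfl, h, -⟩ | ⟨a, b, rfl, h, -⟩) <;> simp_all

/-!
Dependent random choice, with `d = ⌊log₂ n⌋` and `t = 2d`. For a uniformly random `t`-tuple `T`
in `B`, the common neighbourhood `N(T) ⊆ A` has expected size `∑ₐ deg(a)ᵗ / mᵗ ≥ n²` (convexity
and density `m²/8`), while a `d`-tuple `u` in `A` lies in `N(T)` only if `T` lies in `N(u)`, so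
the expected number of `u` in `N(T)` with `|N(u)| < n` is at most `mᵈ (n/m)ᵗ ≤ 1`. Deleting one
entry of each such `u` from a good `N(T)` leaves a set `U` of at least `n` vertices any `d` of
which have at least `n` common neighbours. Embed `A'` into `U` arbitrarily: each `b ∈ B'` has at
most `d` neighbours, hence at least `n ≥ |B'|` candidate images, and Hall's condition holds.
For `R(H)`, split `K_{2n⁸}` into two halves; the majority colour between them is a bipartite
graph of density at least `1/2`.
-/

section

open Finset Fintype

variable {α β : Type*}

theorem sum_card_filter_forall_tuple [Fintype β] (P : α → β → Prop) [DecidableRel P]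
    (s : Finset α) (t : ℕ) :
    ∑ T : Fin t → β, #{a ∈ s | ∀ j, P a (T j)} = ∑ a ∈ s, #{b | P a b} ^ t := by
  have := sum_card_bipartiteAbove_eq_sum_card_bipartiteBelow (s := s) (t := univ)
    (r := fun a (T : Fin t → β) => ∀ j, P a (T j))
  refine this.symm.trans (sum_congr rfl fun a _ => ?_)
  rw [← card_piFinset_const]
  congr 1
  ext T
  simp [bipartiteAbove, mem_piFinset]

theorem exists_finset_forall_tuple_le_card_commonNbhd [Fintype α] [DecidableEq α] [Fintype β]
    [Nonempty β] (S : α → β → Prop) [DecidableRel S] {d t n r : ℕ} (hd : 0 < d)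
    (h : card α ^ d * n ^ t + r * card β ^ t ≤ ∑ a, #{b | S a b} ^ t) :
    ∃ U : Finset α, r ≤ #U ∧ ∀ u : Fin d → α, (∀ i, u i ∈ U) → n ≤ #{b | ∀ i, S (u i) b} := by
  set bad : Finset (Fin d → α) := {u | #{b | ∀ i, S (u i) b} < n}
  have hbad : ∑ T : Fin t → β, #{u ∈ bad | ∀ j i, S (u i) (T j)} ≤ card α ^ d * n ^ t := by
    rw [sum_card_filter_forall_tuple (fun (u : Fin d → α) b => ∀ i, S (u i) b)]
    calc ∑ u ∈ bad, #{b | ∀ i, S (u i) b} ^ t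
        ≤ ∑ _u ∈ bad, n ^ t := sum_le_sum fun u hu => by gcongr; exact (mem_filter.1 hu).2.le
      _ ≤ card α ^ d * n ^ t := by
        rw [sum_const, smul_eq_mul]
        gcongr
        simpa using card_le_univ bad
  obtain ⟨T, -, hT⟩ : ∃ T ∈ (univ : Finset (Fin t → β)),
      #{u ∈ bad | ∀ j i, S (u i) (T j)} + r ≤ #{a | ∀ j, S a (T j)} := by
    refine exists_le_of_sum_le univ_nonempty ?_
    rw [sum_card_filter_forall_tuple S, sum_add_distrib, sum_const, card_univ, card_fun,
      Fintype.card_fin, smul_eq_mul, mul_comm]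
    omega
  set nbhd : Finset α := {a | ∀ j, S a (T j)}
  set firsts := {u ∈ bad | ∀ j i, S (u i) (T j)}.image (· ⟨0, hd⟩)
  refine ⟨nbhd \ firsts, ?_, fun u hu => ?_⟩
  · have := le_card_sdiff firsts nbhd
    have : #firsts ≤ _ := card_image_le
    omega
  · by_contra! hlt
    refine (mem_sdiff.1 (hu ⟨0, hd⟩)).2 (mem_image_of_mem _ ?_)
    simp only [bad, mem_filter, mem_univ, true_and]
    exact ⟨hlt, fun j i => (mem_filter.1 (mem_sdiff.1 (hu i)).1).2 j⟩

theorem exists_tuple_forall_mem_of_card_le {s U : Finset α} {d : ℕ} (hU : U.Nonempty)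
    (hsU : s ⊆ U) (hs : #s ≤ d) :
    ∃ u : Fin d → α, (∀ i, u i ∈ U) ∧ ∀ a ∈ s, ∃ i, u i = a := by
  obtain ⟨x, hx⟩ := hU
  refine ⟨fun i => s.toList.getD i x, fun i => ?_, fun a ha => ?_⟩
  · simp only [List.getD_eq_getElem?_getD]
    cases h : s.toList[(i : ℕ)]? with
    | none => exact hx
    | some y => exact hsU (mem_toList.1 (List.mem_of_getElem? h))
  · obtain ⟨i, hi, rfl⟩ := List.mem_iff_getElem.1 (mem_toList.2 ha)
    exact ⟨⟨i, hi.trans_le ((length_toList s).trans_le hs)⟩, List.getD_eq_getElem _ _ hi⟩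

theorem le_card_commonNbhd_of_subset [Fintype β] {S : α → β → Prop} [DecidableRel S]
    {U : Finset α} {d n : ℕ} (hU : U.Nonempty)
    (h : ∀ u : Fin d → α, (∀ i, u i ∈ U) → n ≤ #{b | ∀ i, S (u i) b})
    {s : Finset α} (hsU : s ⊆ U) (hs : #s ≤ d) : n ≤ #{b | ∀ a ∈ s, S a b} := by
  obtain ⟨u, huU, hsu⟩ := exists_tuple_forall_mem_of_card_le hU hsU hs
  refine (h u huU).trans (card_le_card fun b hb => ?_)
  simp only [mem_filter, mem_univ, true_and] at hb ⊢
  intro a ha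
  obtain ⟨i, rfl⟩ := hsu a ha
  exact hb i

theorem exists_injective_forall_mem_of_card_le {ι : Type*} [Fintype ι] [DecidableEq α]
    (t : ι → Finset α) (h : ∀ i, card ι ≤ #(t i)) :
    ∃ f : ι → α, Function.Injective f ∧ ∀ i, f i ∈ t i := by
  refine (all_card_le_biUnion_card_iff_exists_injective t).1 fun s => ?_
  obtain rfl | ⟨i, hi⟩ := s.eq_empty_or_nonempty
  · simp
  · exact (card_le_univ s).trans ((h i).trans (card_le_card (subset_biUnion_of_mem t hi)))

theorem exists_embedding_of_le_card_commonNbhd {A' B' A B : Type*} [Fintype A'] [Fintype B']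
    [Fintype B] [DecidableEq A] [DecidableEq B] (R : A' → B' → Prop) [DecidableRel R]
    (S : A → B → Prop) [DecidableRel S] {d : ℕ} (hR : ∀ b, {a | R a b}.ncard ≤ d)
    (U : Finset A) (hA' : card A' ≤ #U)
    (hU : ∀ s ⊆ U, #s ≤ d → card B' ≤ #{x | ∀ a ∈ s, S a x}) :
    ∃ (φ : A' → A) (ψ : B' → B), Function.Injective φ ∧ Function.Injective ψ ∧
      ∀ a b, R a b → S (φ a) (ψ b) := by
  obtain ⟨f⟩ := Function.Embedding.nonempty_of_card_le (hA'.trans_eq (card_coe U).symm)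
  set φ : A' → A := fun a => f a
  have hnbhd b : card B' ≤ #{x | ∀ a ∈ ({a | R a b} : Finset A').image φ, S a x} := by
    refine hU _ (image_subset_iff.2 fun a _ => (f a).2) (card_image_le.trans ?_)
    simpa [Set.ncard_eq_toFinset_card'] using hR b
  obtain ⟨ψ, hψ, hψS⟩ := exists_injective_forall_mem_of_card_le _ hnbhd
  refine ⟨φ, ψ, fun a a' h => f.injective (Subtype.ext h), hψ, fun a b hab => ?_⟩
  exact (mem_filter.1 (hψS b)).2 _ (mem_image_of_mem φ (by simpa using hab))

theorem pow_succ_le_eight_pow_mul_sum_pow [Fintype α] (f : α → ℕ) {t : ℕ} (ht : 0 < t)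
    (hE : card α ^ 2 ≤ 8 * ∑ a, f a) :
    card α ^ (t + 1) ≤ 8 ^ t * ∑ a, f a ^ t := by
  obtain ⟨s, rfl⟩ : ∃ s, t = s + 1 := ⟨t - 1, by omega⟩
  obtain hα | hα := (card α).eq_zero_or_pos
  · simp [hα]
  have jensen := pow_sum_le_card_mul_sum_pow (s := univ) (f := f) (fun _ _ => Nat.zero_le _) s
  rw [card_univ, Nat.cast_id] at jensen
  refine Nat.le_of_mul_le_mul_left ?_ (pow_pos hα s)
  calc card α ^ s * card α ^ (s + 1 + 1) = (card α ^ 2) ^ (s + 1) := by ring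
    _ ≤ (8 * ∑ a, f a) ^ (s + 1) := by gcongr
    _ ≤ card α ^ s * (8 ^ (s + 1) * ∑ a, f a ^ (s + 1)) := by
      rw [mul_pow, mul_left_comm]; gcongr

theorem le_sum_pow_of_sq_le_eight_mul_sum [Fintype α] (f : α → ℕ) {n d : ℕ} (hn : 2 ≤ n)
    (hd : 0 < d) (hdn : 2 ^ d ≤ n) (hα : n ^ 8 ≤ card α) (hE : card α ^ 2 ≤ 8 * ∑ a, f a) :
    card α ^ d * n ^ (2 * d) + n * card α ^ (2 * d) ≤ ∑ a, f a ^ (2 * d) := by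
  set m := card α
  have h8 : 8 ^ (2 * d) * n ^ 2 ≤ m := calc
    8 ^ (2 * d) * n ^ 2 = (2 ^ d) ^ 6 * n ^ 2 := by
      rw [← pow_mul, show (8 : ℕ) = 2 ^ 3 by norm_num, ← pow_mul]; ring_nf
    _ ≤ n ^ 6 * n ^ 2 := by gcongr
    _ = n ^ 8 := by ring
    _ ≤ m := hα
  have hsum : n ^ 2 * m ^ (2 * d) ≤ ∑ a, f a ^ (2 * d) := by
    refine Nat.le_of_mul_le_mul_left ?_ (pow_pos (by norm_num : 0 < 8) (2 * d))
    calc 8 ^ (2 * d) * (n ^ 2 * m ^ (2 * d)) = 8 ^ (2 * d) * n ^ 2 * m ^ (2 * d) := by ring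
      _ ≤ m * m ^ (2 * d) := by gcongr
      _ = m ^ (2 * d + 1) := by ring
      _ ≤ 8 ^ (2 * d) * ∑ a, f a ^ (2 * d) := pow_succ_le_eight_pow_mul_sum_pow f (by omega) hE
  have hbad : m ^ d * n ^ (2 * d) ≤ m ^ (2 * d) := calc
    m ^ d * n ^ (2 * d) = m ^ d * (n ^ 2) ^ d := by ring
    _ ≤ m ^ d * m ^ d := by gcongr; exact (Nat.pow_le_pow_right (by omega) (by norm_num)).trans hα
    _ = m ^ (2 * d) := by ring
  calc m ^ d * n ^ (2 * d) + n * m ^ (2 * d) ≤ (n + 1) * m ^ (2 * d) := by linarith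
    _ ≤ n ^ 2 * m ^ (2 * d) := by gcongr; nlinarith
    _ ≤ ∑ a, f a ^ (2 * d) := hsum

theorem le_natLog_of_le_logb {k n : ℕ} (h : (k : ℝ) ≤ Real.logb 2 n) : k ≤ Nat.log 2 n := by
  rw [← Real.natFloor_logb_natCast]
  exact Nat.le_floor (by simpa using h)

theorem ncard_setOf_prod_eq_sum_card [Fintype α] [Fintype β] (S : α → β → Prop) [DecidableRel S] :
    {p : α × β | S p.1 p.2}.ncard = ∑ a, #{b | S a b} := by
  rw [Set.ncard_eq_toFinset_card', Set.toFinset_ofPred, card_filter, Fintype.sum_prod_type]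
  simp only [card_filter]

theorem exists_card_le_two_mul_ncard [Fintype α] (col : α → Bool) :
    ∃ c, card α ≤ 2 * {x | col x = c}.ncard := by
  have := Set.ncard_add_ncard_compl {x | col x = true}
  simp only [Set.compl_ofPred, Bool.not_eq_true, Nat.card_eq_fintype_card] at this
  by_cases h : {x | col x = true}.ncard ≤ {x | col x = false}.ncard
  · exact ⟨false, by omega⟩
  · exact ⟨true, by omega⟩

theorem ramseyLE_biGraph_two_mul {A' B' : Type*} (R : A' → B' → Prop) (N : ℕ)
    (h : ∀ S : Fin N → Fin N → Prop, N ^ 2 ≤ 2 * {p : Fin N × Fin N | S p.1 p.2}.ncard →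
      ∃ (φ : A' → Fin N) (ψ : B' → Fin N), Function.Injective φ ∧ Function.Injective ψ ∧
        ∀ a b, R a b → S (φ a) (ψ b)) :
    RamseyLE (biGraph R) (2 * N) := by
  intro col
  let e : Fin N ⊕ Fin N ≃ Fin (2 * N) := finSumFinEquiv.trans (finCongr (two_mul N).symm)
  obtain ⟨c, hc⟩ := exists_card_le_two_mul_ncard fun p : Fin N × Fin N =>
    col s(e (.inl p.1), e (.inr p.2))
  obtain ⟨φ, ψ, hφ, hψ, hS⟩ := h (fun a b => col s(e (.inl a), e (.inr b)) = c)
    (by simpa [sq] using hc)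
  refine ⟨c, e ∘ Sum.map φ ψ, e.injective.comp (Sum.map_injective.2 ⟨hφ, hψ⟩), ?_⟩
  rintro _ _ (⟨a, b, rfl, rfl, hab⟩ | ⟨a, b, rfl, rfl, hab⟩)
  · exact hS a b hab
  · rw [Sym2.eq_swap]; exact hS a b hab

theorem exists_embedding_of_sq_le_eight_mul_ncard {A' B' A B : Type*} [Fintype A'] [Fintype B']
    [Fintype A] [Fintype B] (R : A' → B' → Prop) (S : A → B → Prop) {n m : ℕ}
    (hA' : card A' ≤ n) (hB' : card B' ≤ n) (hn : 2 ≤ n)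
    (hR : ∀ b, {a | R a b}.ncard ≤ Nat.log 2 n) (hA : card A = m) (hB : card B = m)
    (hm : n ^ 8 ≤ m) (hE : m ^ 2 ≤ 8 * {p : A × B | S p.1 p.2}.ncard) :
    ∃ (φ : A' → A) (ψ : B' → B), Function.Injective φ ∧ Function.Injective ψ ∧
      ∀ a b, R a b → S (φ a) (ψ b) := by
  classical
  set d := Nat.log 2 n
  have hd : 0 < d := Nat.log_pos one_lt_two hn
  have : Nonempty B := card_pos_iff.1 (hB ▸ lt_of_lt_of_le (by positivity) hm)
  rw [ncard_setOf_prod_eq_sum_card] at hE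
  subst hA
  have hsum := le_sum_pow_of_sq_le_eight_mul_sum _ hn hd (Nat.pow_log_le_self 2 (by omega)) hm hE
  obtain ⟨U, hnU, hU⟩ :=
    exists_finset_forall_tuple_le_card_commonNbhd S (n := n) (r := n) hd (by rwa [hB])
  exact exists_embedding_of_le_card_commonNbhd R S hR U (hA'.trans hnU) fun s hsU hs =>
    hB'.trans (le_card_commonNbhd_of_subset (card_pos.1 (by omega)) hU hsU hs)

end

theorem bipartite_embedding_and_ramsey_general (A' B' : Type*) [Fintype A'] [Fintype B']
    (R : A' → B' → Prop) (n : ℕ)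
    (hn : n = Fintype.card A' + Fintype.card B') (hn2 : 2 ≤ n)
    (hdegB : ∀ b : B', ({a : A' | R a b}.ncard : ℝ) ≤ Real.logb 2 n) :
    (∀ (A B : Type) [Fintype A] [Fintype B] (S : A → B → Prop) (m : ℕ),
      Fintype.card A = m → Fintype.card B = m → n ^ 8 ≤ m →
      (m : ℝ) ^ 2 / 8 ≤ ({p : A × B | S p.1 p.2}.ncard : ℝ) →
      ∃ (φ : A' → A) (ψ : B' → B), Function.Injective φ ∧ Function.Injective ψ ∧
        ∀ a b, R a b → S (φ a) (ψ b)) ∧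
    RamseyLE (biGraph R) (2 * n ^ 8) := by
  have embed (A B : Type) [Fintype A] [Fintype B] (S : A → B → Prop) (m : ℕ)
      (hA : Fintype.card A = m) (hB : Fintype.card B = m) (hm : n ^ 8 ≤ m)
      (hE : m ^ 2 ≤ 8 * {p : A × B | S p.1 p.2}.ncard) :=
    exists_embedding_of_sq_le_eight_mul_ncard R S (by omega) (by omega) hn2
      (fun b => le_natLog_of_le_logb (hdegB b)) hA hB hm hE
  refine ⟨fun A B _ _ S m hA hB hm hE => embed A B S m hA hB hm ?_,
    ramseyLE_biGraph_two_mul R _ fun S hS =>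
      embed _ _ S _ (Fintype.card_fin _) (Fintype.card_fin _) le_rfl (by omega)⟩
  have : (m : ℝ) ^ 2 ≤ 8 * ({p : A × B | S p.1 p.2}.ncard : ℝ) := by linarith
  exact_mod_cast this

/-- Any bipartite graph `H` on `n ≥ 2` vertices of maximum degree at most `log₂ n` embeds
into any bipartite graph with vertex classes of size `m ≥ n⁸` and at least `m²/8` edges;
in particular `R(H) ≤ 2n⁸`. -/
theorem bipartite_embedding_and_ramsey (A' B' : Type*) [Fintype A'] [Fintype B']
    (R : A' → B' → Prop) (n : ℕ)
    (hn : n = Fintype.card A' + Fintype.card B') (hn2 : 2 ≤ n)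
    (hdegA : ∀ a : A', ({b : B' | R a b}.ncard : ℝ) ≤ Real.logb 2 n)
    (hdegB : ∀ b : B', ({a : A' | R a b}.ncard : ℝ) ≤ Real.logb 2 n) :
    (∀ (A B : Type) [Fintype A] [Fintype B] (S : A → B → Prop) (m : ℕ),
      Fintype.card A = m → Fintype.card B = m → n ^ 8 ≤ m →
      (m : ℝ) ^ 2 / 8 ≤ ({p : A × B | S p.1 p.2}.ncard : ℝ) →
      ∃ (φ : A' → A) (ψ : B' → B), Function.Injective φ ∧ Function.Injective ψ ∧
        ∀ a b, R a b → S (φ a) (ψ b)) ∧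
    RamseyLE (biGraph R) (2 * n ^ 8) :=
  bipartite_embedding_and_ramsey_general A' B' R n hn hn2 hdegB
end
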